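/- If the base category C is univalent and has coproducts, then the category HSS(H,θ) of heterogeneous substitution systems for a signature (H,θ) is univalent. -/

import Mathlib

open CategoryTheory Limits

universe v u

/-- A pointed endofunctor on `C`. -/
structure Ptd (C : Type u) [Category.{v} C] where
  Z : C ⥤ C
  e : 𝟭 C ⟶ Z

/-- A *signature* over `C`: an endofunctor `H` on the endofunctor category `[C,C]`
together with a strength `θ : (H −)·U∼ ⟶ H (−·U∼)`, natural in both variables and
satisfying the unit and composition coherence laws (here `X·Z` is the composite
`Z ⋙ X`, i.e. `A ↦ X (Z A)`). -/
structure Signature (C : Type u) [Category.{v} C] where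
  H : (C ⥤ C) ⥤ (C ⥤ C)
  θ : ∀ (X : C ⥤ C) (Z : Ptd C), (Z.Z ⋙ H.obj X) ⟶ H.obj (Z.Z ⋙ X)
  θ_nat_X : ∀ {X X' : C ⥤ C} (α : X ⟶ X') (Z : Ptd C),
      Functor.whiskerLeft Z.Z (H.map α) ≫ θ X' Z = θ X Z ≫ H.map (Functor.whiskerLeft Z.Z α)
  θ_nat_Z : ∀ (X : C ⥤ C) {Z Z' : Ptd C} (g : Z.Z ⟶ Z'.Z), Z.e ≫ g = Z'.e →
      Functor.whiskerRight g (H.obj X) ≫ θ X Z' = θ X Z ≫ H.map (Functor.whiskerRight g X)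
  θ_id : ∀ X : C ⥤ C,
      θ X ⟨𝟭 C, 𝟙 (𝟭 C)⟩ =
        (Functor.leftUnitor (H.obj X)).hom ≫ H.map (Functor.leftUnitor X).inv
  θ_comp : ∀ (X : C ⥤ C) (Z Z' : Ptd C),
      θ X ⟨Z.Z ⋙ Z'.Z, Z.e ≫ Functor.whiskerLeft Z.Z Z'.e⟩ =
        (Functor.associator Z.Z Z'.Z (H.obj X)).hom ≫
          Functor.whiskerLeft Z.Z (θ X Z') ≫ θ (Z'.Z ⋙ X) Z ≫
          H.map (Functor.associator Z.Z Z'.Z X).inv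

variable {C : Type u} [Category.{v} C]

/-- A *heterogeneous substitution system* for a signature `(H, θ)`:
an `(Id + H)`-algebra, presented by its components `η : Id ⟶ T` and `τ : H T ⟶ T`,
together with, for every morphism of pointed endofunctors `f : (Z,e) ⟶ (T,η)`,
a unique bracket `⦃f⦄ : T·Z ⟶ T` satisfying the two substitution equations. -/
structure HSS (S : Signature C) where
  T : C ⥤ C
  η : 𝟭 C ⟶ T
  τ : S.H.obj T ⟶ T
  bracket : ∀ (Z : Ptd C) (f : Z.Z ⟶ T), Z.e ≫ f = η → (Z.Z ⋙ T ⟶ T)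
  bracket_η : ∀ (Z : Ptd C) (f : Z.Z ⟶ T) (hf : Z.e ≫ f = η),
      Functor.whiskerLeft Z.Z η ≫ bracket Z f hf = f
  bracket_τ : ∀ (Z : Ptd C) (f : Z.Z ⟶ T) (hf : Z.e ≫ f = η),
      Functor.whiskerLeft Z.Z τ ≫ bracket Z f hf = S.θ T Z ≫ S.H.map (bracket Z f hf) ≫ τ
  bracket_unique : ∀ (Z : Ptd C) (f : Z.Z ⟶ T) (hf : Z.e ≫ f = η)
      (h : Z.Z ⋙ T ⟶ T),
      Functor.whiskerLeft Z.Z η ≫ h = f →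
      Functor.whiskerLeft Z.Z τ ≫ h = S.θ T Z ≫ S.H.map h ≫ τ →
      h = bracket Z f hf

/-- A morphism of heterogeneous substitution systems: an `(Id+H)`-algebra morphism
compatible with the brackets on either side. -/
structure HSSHom {S : Signature C} (A B : HSS S) where
  β : A.T ⟶ B.T
  hη : A.η ≫ β = B.η
  hτ : A.τ ≫ β = S.H.map β ≫ B.τ
  hbr : ∀ (Z : Ptd C) (f : Z.Z ⟶ A.T) (hf : Z.e ≫ f = A.η)
      (hf' : Z.e ≫ (f ≫ β) = B.η),
    A.bracket Z f hf ≫ β = Functor.whiskerLeft Z.Z β ≫ B.bracket Z (f ≫ β) hf'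

theorem HSSHom.ext' {S : Signature C} {A B : HSS S} (g h : HSSHom A B)
    (w : g.β = h.β) : g = h := by
  cases g; cases h; cases w; rfl

instance HSScat (S : Signature C) : Category (HSS S) where
  Hom := HSSHom
  id A := { β := 𝟙 A.T
            hη := Category.comp_id _
            hτ := by simp
            hbr := by intro Z f hf hf'; simp }
  comp {A B D} g h :=
    { β := g.β ≫ h.β
      hη := by rw [← Category.assoc, g.hη, h.hη]
      hτ := by rw [← Category.assoc, g.hτ, Category.assoc, h.hτ, ← Category.assoc,
        ← Functor.map_comp]
      hbr := by
        intro Z f hf hf'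
        have h1 : Z.e ≫ (f ≫ g.β) = B.η := by rw [← Category.assoc, hf, g.hη]
        have h2 : Z.e ≫ ((f ≫ g.β) ≫ h.β) = D.η := by
          rw [← Category.assoc, h1, h.hη]
        rw [← Category.assoc, g.hbr Z f hf h1, Category.assoc,
          h.hbr Z (f ≫ g.β) h1 h2]
        simp }
  id_comp g := HSSHom.ext' _ _ (Category.id_comp g.β)
  comp_id g := HSSHom.ext' _ _ (Category.comp_id g.β)
  assoc f g h := HSSHom.ext' _ _ (Category.assoc f.β g.β h.β)

/-- A category is *univalent* if for all objects `a b` the canonical map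
`idtoiso : (a = b) → (a ≅ b)` (in Mathlib: `eqToIso`) is an equivalence of types. -/
def IsUnivalent (D : Type u) [Category.{v} D] : Prop :=
  ∀ a b : D, Function.Bijective (fun p : a = b => eqToIso p)

/-
An isomorphism of substitution systems is in particular an isomorphism of the underlying
endofunctors, which in the univalent category `[C, C]` comes from an equality `T = T'`.
Along this equality the algebra structures `η, τ` agree because the isomorphism is an algebra
morphism, and the brackets agree because they are unique; so the two systems are equal.
Abstractly: the forgetful functor `HSS(H, θ) ⥤ [C, C]` is amnestic, and a category with an
amnestic functor into a univalent category is univalent.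
-/

section Univalence

universe v₁ u₁ v₂ u₂

variable {D : Type u₁} [Category.{v₁} D] {E : Type u₂} [Category.{v₂} E]

theorem isUnivalent_iff_exists_eqToIso :
    IsUnivalent D ↔ ∀ {a b : D} (e : a ≅ b), ∃ p : a = b, eqToIso p = e :=
  ⟨fun h _ _ e => (h _ _).2 e, fun h _ _ => ⟨fun _ _ _ => rfl, fun e => h e⟩⟩

theorem IsUnivalent.functorCategory (hE : IsUnivalent E) : IsUnivalent (D ⥤ E) := by
  rw [isUnivalent_iff_exists_eqToIso] at hE ⊢
  intro F G e
  choose p hp using fun X => hE (e.app X)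
  have happ : ∀ X, e.hom.app X = eqToHom (p X) := fun X => (congrArg Iso.hom (hp X)).symm
  exact ⟨Functor.ext_of_iso e p happ, by ext X; rw [eqToIso.hom, eqToHom_app, happ]⟩

/-- `F` is amnestic: an isomorphism lying over an identity is an identity. -/
def CategoryTheory.Functor.IsAmnestic (F : D ⥤ E) : Prop :=
  ∀ {a b : D} (e : a ≅ b) (p : F.obj a = F.obj b), F.map e.hom = eqToHom p →
    ∃ q : a = b, eqToIso q = e

theorem CategoryTheory.Functor.isAmnestic_of_faithful (F : D ⥤ E) [F.Faithful]
    (h : ∀ {a b : D} (e : a ≅ b) (p : F.obj a = F.obj b), F.map e.hom = eqToHom p → a = b) :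
    F.IsAmnestic := fun e p hp =>
  ⟨h e p hp, Iso.ext (F.map_injective (by rw [eqToIso.hom, eqToHom_map, hp]))⟩

theorem IsUnivalent.of_isAmnestic (F : D ⥤ E) (hF : F.IsAmnestic) (hE : IsUnivalent E) :
    IsUnivalent D := by
  rw [isUnivalent_iff_exists_eqToIso] at hE ⊢
  intro a b e
  obtain ⟨p, hp⟩ := hE (F.mapIso e)
  exact hF e p (congrArg Iso.hom hp).symm

end Univalence

namespace HSS

variable {S : Signature C}

/-- Brackets are unique, so a substitution system is determined by its algebra `(T, η, τ)`. -/
theorem ext {A B : HSS S} (hT : A.T = B.T) (hη : A.η ≫ eqToHom hT = B.η)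
    (hτ : A.τ ≫ eqToHom hT = S.H.map (eqToHom hT) ≫ B.τ) : A = B := by
  obtain ⟨T, η, τ, bracket, bracket_η, bracket_τ, _⟩ := A
  obtain ⟨T', η', τ', bracket', _, _, bracket_unique'⟩ := B
  dsimp only at hT hη hτ
  subst hT
  simp only [eqToHom_refl, Category.comp_id, CategoryTheory.Functor.map_id, Category.id_comp]
    at hη hτ
  subst hη hτ
  obtain rfl : bracket = bracket' := by
    funext Z f hf
    exact bracket_unique' Z f hf _ (bracket_η Z f hf) (bracket_τ Z f hf)
  rfl

variable (S) in
def forget : HSS S ⥤ (C ⥤ C) where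
  obj A := A.T
  map g := g.β

instance : (forget S).Faithful := ⟨fun h => HSSHom.ext' _ _ h⟩

variable (S) in
theorem forget_isAmnestic : (forget S).IsAmnestic :=
  (forget S).isAmnestic_of_faithful fun {A B} e p hp => by
    change A.T = B.T at p
    change e.hom.β = eqToHom p at hp
    exact ext p (by rw [← hp]; exact e.hom.hη) (by rw [← hp]; exact e.hom.hτ)

end HSS

/-- **If the base category `C` is univalent, then the category `HSS(H,θ)` of
heterogeneous substitution systems for a signature `(H,θ)` is univalent.** -/
theorem hss_univalent (hC : IsUnivalent C) (S : Signature C) :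
    IsUnivalent (HSS S) :=
  IsUnivalent.of_isAmnestic (HSS.forget S) (HSS.forget_isAmnestic S) hC.functorCategory
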